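/- The cactus group J_4 admits the presentation ⟨a, b, c | a² = b² = c² = 1, a·c·a·c = c·a·c·a, c·(b·a·b) = (b·a·b)·c⟩: the homomorphism from this presented group to J_4 sending a ↦ s_{1,2}, b ↦ s_{1,3}, c ↦ s_{1,4} is a group isomorphism. -/
import Mathlib


/-- The set of intervals `[p,q]`, `1 ≤ p < q ≤ n`, indexing the generators `s_{p,q}`
of the cactus group `J_n`. -/
def cactusSet (n : ℕ) : Set (ℕ × ℕ) := {pq | 1 ≤ pq.1 ∧ pq.1 < pq.2 ∧ pq.2 ≤ n}

/-- The defining relations (j1)-(j3) of the cactus group, restricted to a collection `C`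
of generating intervals: exactly those cactus relations involving only generators from `C`. -/
def cactusRels (C : Set (ℕ × ℕ)) : Set (FreeGroup C) :=
  {w | (∃ a : C, w = FreeGroup.of a * FreeGroup.of a) ∨
    (∃ a b : C, (a.1.2 < b.1.1 ∨ b.1.2 < a.1.1) ∧
      w = FreeGroup.of a * FreeGroup.of b * (FreeGroup.of a)⁻¹ * (FreeGroup.of b)⁻¹) ∨
    (∃ a b c : C, a.1.1 ≤ b.1.1 ∧ b.1.2 ≤ a.1.2 ∧
      c.1.1 = a.1.1 + a.1.2 - b.1.2 ∧ c.1.2 = a.1.1 + a.1.2 - b.1.1 ∧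
      w = FreeGroup.of a * FreeGroup.of b * (FreeGroup.of a)⁻¹ * (FreeGroup.of c)⁻¹)}

/-- The group presented by the generators `s_I`, `I ∈ C`, and those cactus relations
involving only these generators. -/
abbrev PartialCactusGroup (C : Set (ℕ × ℕ)) := PresentedGroup (cactusRels C)

/-- The cactus group `J_n`. -/
abbrev CactusGroup (n : ℕ) := PartialCactusGroup (cactusSet n)


/-- The generator `s_{1,2}` of `J_4`. -/
def s12 : CactusGroup 4 := PresentedGroup.of ⟨(1, 2), ⟨by omega, by omega, by omega⟩⟩

/-- The generator `s_{1,3}` of `J_4`. -/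
def s13 : CactusGroup 4 := PresentedGroup.of ⟨(1, 3), ⟨by omega, by omega, by omega⟩⟩

/-- The generator `s_{1,4}` of `J_4`. -/
def s14 : CactusGroup 4 := PresentedGroup.of ⟨(1, 4), ⟨by omega, by omega, by omega⟩⟩

/-- The relations of `⟨a, b, c | a² = b² = c² = 1, acac = caca, c(bab) = (bab)c⟩`,
with `a`, `b`, `c` coded as `0`, `1`, `2`. -/
def j4Rels : Set (FreeGroup (Fin 3)) :=
  {FreeGroup.of 0 * FreeGroup.of 0, FreeGroup.of 1 * FreeGroup.of 1,
    FreeGroup.of 2 * FreeGroup.of 2,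
    FreeGroup.of 0 * FreeGroup.of 2 * FreeGroup.of 0 * FreeGroup.of 2 *
      (FreeGroup.of 2 * FreeGroup.of 0 * FreeGroup.of 2 * FreeGroup.of 0)⁻¹,
    FreeGroup.of 2 * (FreeGroup.of 1 * FreeGroup.of 0 * FreeGroup.of 1) *
      ((FreeGroup.of 1 * FreeGroup.of 0 * FreeGroup.of 1) * FreeGroup.of 2)⁻¹}

-- auxiliary development
lemma relOne {α : Type*} {rels : Set (FreeGroup α)} {r : FreeGroup α} (h : r ∈ rels) :
    PresentedGroup.mk rels r = 1 :=
  (QuotientGroup.eq_one_iff r).mpr (Subgroup.subset_normalClosure h)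

-- J4 side generic lemmas
lemma sqJ (x : cactusSet 4) :
    (PresentedGroup.of x : CactusGroup 4) * PresentedGroup.of x = 1 := by
  have h := relOne (show FreeGroup.of x * FreeGroup.of x ∈ cactusRels (cactusSet 4) from
    Or.inl ⟨x, rfl⟩)
  rwa [map_mul] at h

lemma invJ (x : cactusSet 4) :
    (PresentedGroup.of x : CactusGroup 4)⁻¹ = PresentedGroup.of x :=
  inv_eq_of_mul_eq_one_right (sqJ x)

lemma commJ (a b : cactusSet 4) (h : a.1.2 < b.1.1 ∨ b.1.2 < a.1.1) :
    (PresentedGroup.of a : CactusGroup 4) * PresentedGroup.of b =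
      PresentedGroup.of b * PresentedGroup.of a := by
  have h1 := relOne (show _ ∈ cactusRels (cactusSet 4) from Or.inr (Or.inl ⟨a, b, h, rfl⟩))
  rw [map_mul, map_mul, map_mul, map_inv, map_inv] at h1
  exact mul_inv_eq_iff_eq_mul.mp (mul_inv_eq_one.mp h1)

lemma conjJ (a b c : cactusSet 4) (h1 : a.1.1 ≤ b.1.1) (h2 : b.1.2 ≤ a.1.2)
    (h3 : c.1.1 = a.1.1 + a.1.2 - b.1.2) (h4 : c.1.2 = a.1.1 + a.1.2 - b.1.1) :
    (PresentedGroup.of a : CactusGroup 4) * PresentedGroup.of b * (PresentedGroup.of a)⁻¹ =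
      PresentedGroup.of c := by
  have h5 := relOne (show _ ∈ cactusRels (cactusSet 4) from
    Or.inr (Or.inr ⟨a, b, c, h1, h2, h3, h4, rfl⟩))
  rw [map_mul, map_mul, map_mul, map_inv, map_inv] at h5
  exact mul_inv_eq_one.mp h5

-- P side
abbrev Pg := PresentedGroup j4Rels
def pA : Pg := PresentedGroup.of 0
def pB : Pg := PresentedGroup.of 1
def pC : Pg := PresentedGroup.of 2

lemma hA : pA * pA = 1 := by
  have h := relOne (show FreeGroup.of 0 * FreeGroup.of 0 ∈ j4Rels from Set.mem_insert _ _)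
  rwa [map_mul] at h

lemma hB : pB * pB = 1 := by
  have h := relOne (show FreeGroup.of 1 * FreeGroup.of 1 ∈ j4Rels from
    Set.mem_insert_of_mem _ (Set.mem_insert _ _))
  rwa [map_mul] at h

lemma hC : pC * pC = 1 := by
  have h := relOne (show FreeGroup.of 2 * FreeGroup.of 2 ∈ j4Rels from
    Set.mem_insert_of_mem _ (Set.mem_insert_of_mem _ (Set.mem_insert _ _)))
  rwa [map_mul] at h

lemma hACAC : pA * pC * pA * pC = pC * pA * pC * pA := by
  have h := relOne (show _ ∈ j4Rels from
    Set.mem_insert_of_mem _ (Set.mem_insert_of_mem _ (Set.mem_insert_of_mem _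
      (Set.mem_insert _ _))))
  rw [map_mul, map_inv, map_mul, map_mul, map_mul, map_mul, map_mul] at h
  exact mul_inv_eq_one.mp h

lemma hCBAB : pC * (pB * pA * pB) = pB * pA * pB * pC := by
  have h := relOne (show _ ∈ j4Rels from
    Set.mem_insert_of_mem _ (Set.mem_insert_of_mem _ (Set.mem_insert_of_mem _
      (Set.mem_insert_of_mem _ rfl))))
  rw [map_mul, map_inv, map_mul, map_mul, map_mul, map_mul, map_mul] at h
  exact mul_inv_eq_one.mp h

lemma invA : pA⁻¹ = pA := inv_eq_of_mul_eq_one_right hA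
lemma invB : pB⁻¹ = pB := inv_eq_of_mul_eq_one_right hB
lemma invC : pC⁻¹ = pC := inv_eq_of_mul_eq_one_right hC

lemma xA (x : Pg) : pA * (pA * x) = x := by rw [← mul_assoc, hA, one_mul]
lemma xB (x : Pg) : pB * (pB * x) = x := by rw [← mul_assoc, hB, one_mul]
lemma xC (x : Pg) : pC * (pC * x) = x := by rw [← mul_assoc, hC, one_mul]

lemma hACACx (x : Pg) : pA * (pC * (pA * (pC * x))) = pC * (pA * (pC * (pA * x))) := by
  have h : pA * pC * pA * pC * x = pC * pA * pC * pA * x := by rw [hACAC]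
  simpa [mul_assoc] using h

lemma hCBABx (x : Pg) : pC * (pB * (pA * (pB * x))) = pB * (pA * (pB * (pC * x))) := by
  have h : pC * (pB * pA * pB) * x = pB * pA * pB * pC * x := by rw [hCBAB]
  simpa [mul_assoc] using h

def toP0 : ℕ × ℕ → Pg
  | (1, 2) => pA
  | (1, 3) => pB
  | (1, 4) => pC
  | (2, 3) => pB * pA * pB
  | (2, 4) => pC * pB * pC
  | (3, 4) => pC * pA * pC
  | _ => 1

example : toP0 (1,2) = pA := rfl
example : toP0 (2,4) = pC * pB * pC := rfl

lemma mem4 (x : cactusSet 4) : x.1 = (1,2) ∨ x.1 = (1,3) ∨ x.1 = (1,4) ∨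
    x.1 = (2,3) ∨ x.1 = (2,4) ∨ x.1 = (3,4) := by
  obtain ⟨⟨p, q⟩, hx⟩ := x
  simp only [cactusSet, Set.mem_setOf_eq] at hx
  simp only [Prod.mk.injEq]
  omega

set_option maxHeartbeats 2000000 in
lemma hPsi : ∀ r ∈ cactusRels (cactusSet 4),
    FreeGroup.lift (fun x : cactusSet 4 => toP0 x.1) r = 1 := by
  intro r hr
  rcases hr with ⟨a, rfl⟩ | ⟨a, b, hd, rfl⟩ | ⟨a, b, c, h1, h2, h3, h4, rfl⟩
  · rcases mem4 a with ha | ha | ha | ha | ha | ha <;>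
      simp only [map_mul, FreeGroup.lift_apply_of, ha] <;>
      simp only [toP0] <;>
      simp only [mul_assoc, xA, xB, xC, hA, hB, hC, mul_one, one_mul]
  · rcases mem4 a with ha | ha | ha | ha | ha | ha <;>
      rcases mem4 b with hb | hb | hb | hb | hb | hb <;>
      rw [ha, hb] at hd <;>
      first
        | (exfalso; revert hd; decide)
        | (simp only [map_mul, map_inv, FreeGroup.lift_apply_of, ha, hb]
           simp only [toP0]
           simp only [mul_inv_rev, invA, invB, invC]
           simp only [mul_assoc, hACACx, hCBABx, xA, xB, xC, hA, hB, hC, mul_one, one_mul])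
  · rcases mem4 a with ha | ha | ha | ha | ha | ha <;>
      rcases mem4 b with hb | hb | hb | hb | hb | hb <;>
      rcases mem4 c with hc | hc | hc | hc | hc | hc <;>
      rw [ha, hb] at h1 h2 <;> rw [ha, hb, hc] at h3 h4 <;>
      first
        | (exfalso; revert h1 h2 h3 h4; decide)
        | (simp only [map_mul, map_inv, FreeGroup.lift_apply_of, ha, hb, hc]
           simp only [toP0]
           simp only [mul_inv_rev, invA, invB, invC]
           simp only [mul_assoc, hACACx, hCBABx, xA, xB, xC, hA, hB, hC, mul_one, one_mul])

-- concrete generators of J4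
def m12 : cactusSet 4 := ⟨(1, 2), ⟨by omega, by omega, by omega⟩⟩
def m13 : cactusSet 4 := ⟨(1, 3), ⟨by omega, by omega, by omega⟩⟩
def m14 : cactusSet 4 := ⟨(1, 4), ⟨by omega, by omega, by omega⟩⟩
def m23 : cactusSet 4 := ⟨(2, 3), ⟨by omega, by omega, by omega⟩⟩
def m24 : cactusSet 4 := ⟨(2, 4), ⟨by omega, by omega, by omega⟩⟩
def m34 : cactusSet 4 := ⟨(3, 4), ⟨by omega, by omega, by omega⟩⟩

def s23 : CactusGroup 4 := PresentedGroup.of m23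
def s24 : CactusGroup 4 := PresentedGroup.of m24
def s34 : CactusGroup 4 := PresentedGroup.of m34

lemma s12_def : s12 = PresentedGroup.of m12 := rfl
lemma s13_def : s13 = PresentedGroup.of m13 := rfl
lemma s14_def : s14 = PresentedGroup.of m14 := rfl

lemma e1 : s14 * s12 * s14 = s34 := by
  have h := conjJ m14 m12 m34 (by decide) (by decide) (by decide) (by decide)
  rwa [invJ] at h

lemma e2 : s14 * s13 * s14 = s24 := by
  have h := conjJ m14 m13 m24 (by decide) (by decide) (by decide) (by decide)
  rwa [invJ] at h

lemma e3 : s13 * s12 * s13 = s23 := by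
  have h := conjJ m13 m12 m23 (by decide) (by decide) (by decide) (by decide)
  rwa [invJ] at h

lemma e4 : s14 * s23 = s23 * s14 := by
  have h := conjJ m14 m23 m23 (by decide) (by decide) (by decide) (by decide)
  rw [invJ] at h
  have h' : s14 * s23 * s14 = s23 := h
  have sq : s14 * s14 = 1 := sqJ m14
  calc s14 * s23 = s14 * s23 * (s14 * s14) := by rw [sq, mul_one]
    _ = s14 * s23 * s14 * s14 := by simp only [mul_assoc]
    _ = s23 * s14 := by rw [h']

lemma cm : s12 * s34 = s34 * s12 := commJ m12 m34 (by decide)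

def fJ : Fin 3 → CactusGroup 4 := fun i => if i = 0 then s12 else if i = 1 then s13 else s14

lemma hPhi : ∀ r ∈ j4Rels, FreeGroup.lift fJ r = 1 := by
  intro r hr
  simp only [j4Rels, Set.mem_insert_iff, Set.mem_singleton_iff] at hr
  rcases hr with rfl | rfl | rfl | rfl | rfl <;>
    simp only [map_mul, map_inv, FreeGroup.lift_apply_of] <;>
    show _ = (1 : CactusGroup 4)
  · exact sqJ m12
  · exact sqJ m13
  · exact sqJ m14
  · show s12 * s14 * s12 * s14 * (s14 * s12 * s14 * s12)⁻¹ = 1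
    rw [mul_inv_eq_one]
    calc s12 * s14 * s12 * s14 = s12 * (s14 * s12 * s14) := by
          simp only [mul_assoc]
      _ = s34 * s12 := by rw [e1, cm]
      _ = s14 * s12 * s14 * s12 := by rw [← e1]
  · show s14 * (s13 * s12 * s13) * ((s13 * s12 * s13) * s14)⁻¹ = 1
    rw [mul_inv_eq_one, e3, e4]


/-- `J_4` admits the presentation
`⟨a, b, c | a² = b² = c² = 1, acac = caca, c(bab) = (bab)c⟩` via `a ↦ s_{1,2}`, `b ↦ s_{1,3}`,
`c ↦ s_{1,4}`. -/
theorem j4_presentation :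
    ∃ φ : PresentedGroup j4Rels →* CactusGroup 4,
      φ (PresentedGroup.of 0) = s12 ∧ φ (PresentedGroup.of 1) = s13 ∧
      φ (PresentedGroup.of 2) = s14 ∧ Function.Bijective φ := by
  let φ : PresentedGroup j4Rels →* CactusGroup 4 := PresentedGroup.toGroup hPhi
  let ψ : CactusGroup 4 →* PresentedGroup j4Rels := PresentedGroup.toGroup hPsi
  have hφA : φ pA = s12 := PresentedGroup.toGroup.of hPhi
  have hφB : φ pB = s13 := PresentedGroup.toGroup.of hPhi
  have hφC : φ pC = s14 := PresentedGroup.toGroup.of hPhi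
  have hψ12 : ψ s12 = pA := PresentedGroup.toGroup.of hPsi
  have hψ13 : ψ s13 = pB := PresentedGroup.toGroup.of hPsi
  have hψ14 : ψ s14 = pC := PresentedGroup.toGroup.of hPsi
  have left : ψ.comp φ = MonoidHom.id _ := by
    apply PresentedGroup.ext
    intro x
    fin_cases x
    · show ψ (φ pA) = pA
      rw [hφA, hψ12]
    · show ψ (φ pB) = pB
      rw [hφB, hψ13]
    · show ψ (φ pC) = pC
      rw [hφC, hψ14]
  have right : φ.comp ψ = MonoidHom.id _ := by
    apply PresentedGroup.ext
    intro x
    rcases mem4 x with hx | hx | hx | hx | hx | hx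
    · rw [show x = m12 from Subtype.ext hx]
      show φ (ψ s12) = s12
      rw [hψ12, hφA]
    · rw [show x = m13 from Subtype.ext hx]
      show φ (ψ s13) = s13
      rw [hψ13, hφB]
    · rw [show x = m14 from Subtype.ext hx]
      show φ (ψ s14) = s14
      rw [hψ14, hφC]
    · rw [show x = m23 from Subtype.ext hx]
      show φ (ψ s23) = s23
      have h : ψ s23 = pB * pA * pB := PresentedGroup.toGroup.of hPsi
      rw [h, map_mul, map_mul, hφA, hφB, e3]
    · rw [show x = m24 from Subtype.ext hx]
      show φ (ψ s24) = s24
      have h : ψ s24 = pC * pB * pC := PresentedGroup.toGroup.of hPsi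
      rw [h, map_mul, map_mul, hφB, hφC, e2]
    · rw [show x = m34 from Subtype.ext hx]
      show φ (ψ s34) = s34
      have h : ψ s34 = pC * pA * pC := PresentedGroup.toGroup.of hPsi
      rw [h, map_mul, map_mul, hφA, hφC, e1]
  refine ⟨φ, hφA, hφB, hφC, Function.bijective_iff_has_inverse.mpr ⟨ψ, ?_, ?_⟩⟩
  · intro x
    exact DFunLike.congr_fun left x
  · intro x
    exact DFunLike.congr_fun right x
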